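/- In the filter-ideal frame of an integral implicative lattice L, the frame axiom (F0) holds: for a filter x and an ideal y, x ∩ y ≠ ∅ if and only if for every filter u, u ∩ (x ⇝ y) ≠ ∅, where x ⇝ y is the ideal generated by {a → b : a ∈ x, b ∈ y}. -/
import Mathlib

def IsLatFilter {L : Type*} [Lattice L] (x : Set L) : Prop :=
  x.Nonempty ∧ (∀ a b : L, a ∈ x → a ≤ b → b ∈ x) ∧
    (∀ a b : L, a ∈ x → b ∈ x → a ⊓ b ∈ x)

def IsLatIdeal {L : Type*} [Lattice L] (y : Set L) : Prop :=
  y.Nonempty ∧ (∀ a b : L, a ∈ y → b ≤ a → b ∈ y) ∧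
    (∀ a b : L, a ∈ y → b ∈ y → a ⊔ b ∈ y)

/-- the ideal x ⇝ y generated by {imp a b : a ∈ x, b ∈ y} -/
def impIdeal {L : Type*} [Lattice L] (imp : L → L → L) (x y : Set L) : Set L :=
  {d | ∃ a ∈ x, ∃ b ∈ y, d ≤ imp a b}

theorem frame_axiom_F0 {L : Type*} [Lattice L] [BoundedOrder L]
    (imp : L → L → L)
    (A1 : ∀ a b c : L, imp (a ⊔ b) c = imp a c ⊓ imp b c)
    (A2 : ∀ a b c : L, imp a (b ⊓ c) = imp a b ⊓ imp a c)
    (A3 : ∀ a b : L, a ≤ b ↔ ⊤ ≤ imp a b)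
    (x y : Set L) (hx : IsLatFilter x) (hy : IsLatIdeal y) :
    (x ∩ y).Nonempty ↔
      ∀ u : Set L, IsLatFilter u → (u ∩ impIdeal imp x y).Nonempty := by
  constructor
  · rintro ⟨c, hcx, hcy⟩ u hu
    obtain ⟨e, he⟩ := hu.1
    refine ⟨e, he, c, hcx, c, hcy, ?_⟩
    have : ⊤ ≤ imp c c := (A3 c c).mp le_rfl
    exact le_trans le_top this
  · intro h
    have hf : IsLatFilter ({d | ⊤ ≤ d} : Set L) := by
      refine ⟨⟨⊤, le_rfl⟩, fun a b ha hab => le_trans ha hab,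
        fun a b ha hb => le_inf ha hb⟩
    obtain ⟨e, he, a, hax, b, hby, hle⟩ := h _ hf
    have : a ≤ b := (A3 a b).mpr (le_trans he hle)
    exact ⟨b, hx.2.1 a b hax this, hby⟩
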